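/- In the DFA D_n of Definition 1 restricted to alphabet {a,b} (a: cycle (1,…,n−1) fixing 0; b: transposition (0,1); initial state 0; final state n−1), for every state q ∈ {0,…,n−1}, the DFA obtained by changing the initial state to q is minimal with n states; equivalently, every left quotient of L(D_n) has state complexity n. -/
import Mathlib


/-- For the DFA `D_n` restricted to the alphabet `{a,b}` (encoded as `Fin 2`, with
`a = 0 : (1,…,n−1)` fixing `0`, and `b = 1 : (0,1)`; initial state `0`; final state `n−1`),
the DFA obtained by taking any state `q` as initial state is minimal with `n` states:
every state is reachable from `q`, and distinct states have distinct languages.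
Equivalently, every left quotient of `L(D_n)` has state complexity `n`. -/
theorem every_quotient_has_complexity_n (n : ℕ) (hn : 3 ≤ n) (M : DFA (Fin 2) (Fin n))
    (hstart : M.start = ⟨0, by omega⟩)
    (haccept : M.accept = {⟨n - 1, by omega⟩})
    (ha : ∀ q : Fin n,
      (M.step q 0).val = if q.val = 0 then 0 else if q.val = n - 1 then 1 else q.val + 1)
    (hb : ∀ q : Fin n,
      (M.step q 1).val = if q.val = 0 then 1 else if q.val = 1 then 0 else q.val) :
    (∀ q p : Fin n, ∃ w : List (Fin 2), M.evalFrom q w = p) ∧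
    (∀ p q : Fin n,
      {w : List (Fin 2) | M.evalFrom p w ∈ M.accept} =
        {w : List (Fin 2) | M.evalFrom q w ∈ M.accept} → p = q) := by
  have hm : 2 ≤ n - 1 := by omega
  have hacc : ∀ r : Fin n, r ∈ M.accept ↔ r.val = n - 1 := by
    intro r
    have hr := r.isLt
    simp only [haccept, Set.mem_singleton_iff, Fin.ext_iff]
  have hcons : ∀ (s : Fin n) (c : Fin 2) (w : List (Fin 2)),
      M.evalFrom s (c :: w) = M.evalFrom (M.step s c) w := by
    intro s c w; rfl
  -- evaluating `a^k` from a state with positive value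
  have evalA : ∀ (k : ℕ) (q : Fin n), 1 ≤ q.val →
      (M.evalFrom q (List.replicate k 0)).val = ((q.val - 1 + k) % (n - 1)) + 1 := by
    intro k
    induction k with
    | zero =>
      intro q hq
      have hlt : q.val < n := q.isLt
      rw [List.replicate_zero, DFA.evalFrom_nil]
      rw [Nat.mod_eq_of_lt (by omega)]
      omega
    | succ k ih =>
      intro q hq
      rw [List.replicate_succ', DFA.evalFrom_append_singleton]
      have hk := ih q hq
      have hstep := ha (M.evalFrom q (List.replicate k 0))
      have hmod : (q.val - 1 + k) % (n - 1) < n - 1 := Nat.mod_lt _ (by omega)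
      have hmod1 : (q.val - 1 + (k + 1)) % (n - 1) = ((q.val - 1 + k) % (n - 1) + 1) % (n - 1) := by
        conv_lhs => rw [show q.val - 1 + (k + 1) = (q.val - 1 + k) + 1 by ring]
        rw [Nat.add_mod (q.val - 1 + k) 1, Nat.mod_eq_of_lt (show (1:ℕ) < n - 1 by omega)]
      by_cases hc : (q.val - 1 + k) % (n - 1) = n - 2
      · rw [hmod1, hc]
        have : n - 2 + 1 = n - 1 := by omega
        rw [this, Nat.mod_self]
        rw [hstep, hk, hc]
        have h1 : ¬ (n - 2 + 1 = 0) := by omega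
        have h2 : n - 2 + 1 = n - 1 := by omega
        rw [if_neg h1, if_pos h2]
      · rw [hmod1, Nat.mod_eq_of_lt (by omega)]
        rw [hstep, hk]
        have h1 : ¬ ((q.val - 1 + k) % (n - 1) + 1 = 0) := by omega
        have h2 : ¬ ((q.val - 1 + k) % (n - 1) + 1 = n - 1) := by omega
        simp [h1, h2]
  -- evaluating `a^k` from the zero state
  have evalA0 : ∀ (k : ℕ) (q : Fin n), q.val = 0 →
      (M.evalFrom q (List.replicate k 0)).val = 0 := by
    intro k
    induction k with
    | zero => intro q hq; rw [List.replicate_zero, DFA.evalFrom_nil]; exact hq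
    | succ k ih =>
      intro q hq
      rw [List.replicate_succ, hcons]
      apply ih
      rw [ha q, hq]; simp
  constructor
  · -- reachability
    have to0 : ∀ q : Fin n, ∃ w, (M.evalFrom q w).val = 0 := by
      intro q
      by_cases h : q.val = 0
      · exact ⟨[], h⟩
      · refine ⟨List.replicate (n - q.val) 0 ++ [1], ?_⟩
        rw [DFA.evalFrom_append_singleton]
        have h1 : (M.evalFrom q (List.replicate (n - q.val) 0)).val = 1 := by
          rw [evalA _ q (by omega)]
          have hlt : q.val < n := q.isLt
          have : q.val - 1 + (n - q.val) = n - 1 := by omega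
          rw [this, Nat.mod_self]
        rw [hb, h1]
        simp
    have from0 : ∀ (q p : Fin n), q.val = 0 → ∃ w, M.evalFrom q w = p := by
      intro q p hq
      by_cases h : p.val = 0
      · exact ⟨[], Fin.ext (by rw [DFA.evalFrom_nil]; omega)⟩
      · refine ⟨(1 : Fin 2) :: List.replicate (p.val - 1) 0, ?_⟩
        rw [hcons]
        have hs1 : (M.step q 1).val = 1 := by rw [hb q, hq]; simp
        apply Fin.ext
        rw [evalA _ _ (by omega), hs1]
        have hlt : p.val < n := p.isLt
        rw [Nat.mod_eq_of_lt (by omega)]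
        omega
    intro q p
    obtain ⟨w1, h1⟩ := to0 q
    obtain ⟨w2, h2⟩ := from0 _ p h1
    exact ⟨w1 ++ w2, by rw [DFA.evalFrom_of_append, h2]⟩
  · -- distinguishability
    intro p q hpq
    rw [Set.ext_iff] at hpq
    by_contra hne
    have hp := p.isLt
    have hq := q.isLt
    -- distinguishing word from a nonzero state r : a^(n-1-r) is accepted
    have acc_word : ∀ r : Fin n, 1 ≤ r.val →
        (List.replicate (n - 1 - r.val) (0 : Fin 2)) ∈
          {w : List (Fin 2) | M.evalFrom r w ∈ M.accept} := by
      intro r hr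
      have hrlt := r.isLt
      simp only [Set.mem_setOf_eq, hacc]
      rw [evalA _ _ hr]
      have : r.val - 1 + (n - 1 - r.val) = n - 2 := by omega
      rw [this, Nat.mod_eq_of_lt (by omega)]
      omega
    have zero_rej : ∀ (r : Fin n) (k : ℕ), r.val = 0 →
        (List.replicate k (0 : Fin 2)) ∉
          {w : List (Fin 2) | M.evalFrom r w ∈ M.accept} := by
      intro r k hr
      simp only [Set.mem_setOf_eq, hacc]
      rw [evalA0 _ _ hr]
      omega
    rcases Nat.eq_zero_or_pos p.val with hp0 | hp1
    · rcases Nat.eq_zero_or_pos q.val with hq0 | hq1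
      · exact hne (Fin.ext (by omega))
      · have h1 := acc_word q hq1
        have h2 := zero_rej p (n - 1 - q.val) hp0
        exact h2 ((hpq _).mpr h1)
    · rcases Nat.eq_zero_or_pos q.val with hq0 | hq1
      · have h1 := acc_word p hp1
        have h2 := zero_rej q (n - 1 - p.val) hq0
        exact h2 ((hpq _).mp h1)
      · -- both nonzero
        have h1 := acc_word q hq1
        have h2 := (hpq _).mpr h1
        simp only [Set.mem_setOf_eq, hacc] at h2
        rw [evalA _ _ hp1] at h2
        set s := p.val - 1 + (n - 1 - q.val) with hs
        have hsub : s % (n - 1) = n - 2 := by omega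
        rcases Nat.lt_or_ge s (n - 1) with hlt | hge
        · rw [Nat.mod_eq_of_lt hlt] at hsub
          exact hne (Fin.ext (by omega))
        · rw [Nat.mod_eq_sub_mod hge] at hsub
          have : s - (n - 1) < n - 1 := by omega
          rw [Nat.mod_eq_of_lt this] at hsub
          omega
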